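/- Let A = [a_{ij}] be an n×n real matrix with operator norm ‖A‖ (as an operator on Euclidean ℝ^n), and let ξ = (ξ_1, …, ξ_n) be a random vector with K := ‖ξ‖_{E_2} < ∞. Let C > 0 be a constant such that for every centered random variable η with ‖η‖_{ψ_1} < ∞ and every t with |t| ≤ 1/(C‖η‖_{ψ_1}), E exp(tη) ≤ exp(C² ‖η‖_{ψ_1}² t²). Then for every t ≥ 0, P(|ξᵀAξ − E(ξᵀAξ)| ≥ t) ≤ 2 exp(−min{ t² / (16 C² ‖A‖² K⁴), t / (4C ‖A‖ K²) }). -/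

import Mathlib

/-!
For `X = ξᵀAξ` we have `|X| ≤ ‖A‖ |ξ|²`, and the infimum defining `K = ‖ξ‖_{E_2}` is attained
(Fatou), so `E exp(|X| / B) ≤ 2` with `B = ‖A‖ K²`. Centering costs a factor `2`: Jensen gives
`exp(|E X| / B) ≤ 2`, and midpoint convexity of `exp` then yields `‖X - E X‖_{ψ_1} ≤ 2B`.
The assumed moment generating function bound for centered variables, fed into a Chernoff bound
for each tail with the optimal `λ`, gives the claim.
-/

open MeasureTheory ENNReal

universe u

/-- The Luxemburg (ψ_1) norm of a real random variable:
`‖η‖_{ψ_1} = inf{K > 0 : E exp(|η/K|) ≤ 2}` (with value `∞` if no such `K` exists). -/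
noncomputable def psi1Norm {Ω : Type*} [MeasurableSpace Ω] (μ : Measure Ω)
    (η : Ω → ℝ) : ℝ≥0∞ :=
  ⨅ (K : ℝ) (_ : 0 < K)
    (_ : ∫⁻ ω, ENNReal.ofReal (Real.exp (|η ω / K|)) ∂μ ≤ 2), ENNReal.ofReal K

/-- `‖ξ‖_{E_2} = inf{K > 0 : E exp(∑_i ξ_i² / K²) ≤ 2}`
(with value `∞` if no such `K` exists). -/
noncomputable def e2Norm {Ω : Type*} [MeasurableSpace Ω] {n : ℕ} (μ : Measure Ω)
    (ξ : Fin n → Ω → ℝ) : ℝ≥0∞ :=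
  ⨅ (K : ℝ) (_ : 0 < K)
    (_ : ∫⁻ ω, ENNReal.ofReal (Real.exp ((∑ i, ξ i ω ^ 2) / K ^ 2)) ∂μ ≤ 2),
    ENNReal.ofReal K

/-- The operator (spectral) norm of a matrix on Euclidean `ℝ^n`:
`‖A‖ = sup_{|x|₂ = 1} |Ax|₂`. -/
noncomputable def matOpNorm {n : ℕ} (A : Matrix (Fin n) (Fin n) ℝ) : ℝ :=
  ⨆ (x : Fin n → ℝ) (_ : (∑ i, x i ^ 2) ^ ((1 : ℝ) / 2) = 1),
    (∑ i, A.mulVec x i ^ 2) ^ ((1 : ℝ) / 2)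

open Filter Topology Set Matrix
open scoped RealInnerProductSpace

lemma matOpNorm_nonneg {n : ℕ} (A : Matrix (Fin n) (Fin n) ℝ) : 0 ≤ matOpNorm A :=
  Real.iSup_nonneg fun _ => Real.iSup_nonneg fun _ => by positivity

lemma norm_toEuclideanCLM_le_matOpNorm {n : ℕ} (A : Matrix (Fin n) (Fin n) ℝ) :
    ‖toEuclideanCLM (𝕜 := ℝ) A‖ ≤ matOpNorm A := by
  set L := toEuclideanCLM (𝕜 := ℝ) A
  have hnorm (y : Fin n → ℝ) : ‖(WithLp.toLp 2 y : EuclideanSpace ℝ (Fin n))‖ =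
      (∑ i, y i ^ 2) ^ ((1 : ℝ) / 2) := by
    simp [EuclideanSpace.norm_eq, Real.sqrt_eq_rpow]
  have hL (y : Fin n → ℝ) : (∑ i, (A *ᵥ y) i ^ 2) ^ ((1 : ℝ) / 2) = ‖L (WithLp.toLp 2 y)‖ := by
    rw [toEuclideanCLM_toLp, hnorm]
  have hbdd : BddAbove (range fun y : Fin n → ℝ =>
      ⨆ (_ : (∑ i, y i ^ 2) ^ ((1 : ℝ) / 2) = 1), (∑ i, (A *ᵥ y) i ^ 2) ^ ((1 : ℝ) / 2)) := by
    refine ⟨‖L‖, forall_mem_range.2 fun y => Real.iSup_le (fun hy => ?_) (norm_nonneg L)⟩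
    rw [hL, ← mul_one ‖L‖, ← hy, ← hnorm]
    exact L.le_opNorm _
  refine ContinuousLinearMap.opNorm_le_of_unit_norm (matOpNorm_nonneg A) fun x hx => ?_
  obtain ⟨y, rfl⟩ : ∃ y, x = WithLp.toLp 2 y := ⟨x.ofLp, rfl⟩
  rw [hnorm] at hx
  calc ‖L (WithLp.toLp 2 y)‖
      = ⨆ (_ : (∑ i, y i ^ 2) ^ ((1 : ℝ) / 2) = 1), (∑ i, (A *ᵥ y) i ^ 2) ^ ((1 : ℝ) / 2) := by
        rw [ciSup_pos hx, hL]
    _ ≤ matOpNorm A := le_ciSup hbdd y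

lemma abs_quadForm_le {n : ℕ} (A : Matrix (Fin n) (Fin n) ℝ) (v : Fin n → ℝ) :
    |∑ i, ∑ j, A i j * v i * v j| ≤ matOpNorm A * ∑ i, v i ^ 2 := by
  set x : EuclideanSpace ℝ (Fin n) := WithLp.toLp 2 v
  set L := toEuclideanCLM (𝕜 := ℝ) A
  have hquad : ∑ i, ∑ j, A i j * v i * v j = ⟪x, L x⟫ := by
    simp only [L, inner_toEuclideanCLM, dotProduct, mulVec, Finset.mul_sum, x]
    exact Finset.sum_congr rfl fun i _ => Finset.sum_congr rfl fun j _ => by ring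
  have hx : ‖x‖ ^ 2 = ∑ i, v i ^ 2 := by simp [x, EuclideanSpace.norm_sq_eq]
  rw [hquad]
  calc |⟪x, L x⟫| ≤ ‖x‖ * ‖L x‖ := abs_real_inner_le_norm _ _
    _ ≤ ‖x‖ * (matOpNorm A * ‖x‖) := by
        gcongr
        exact (L.le_opNorm x).trans (by gcongr; exact norm_toEuclideanCLM_le_matOpNorm A)
    _ = matOpNorm A * ∑ i, v i ^ 2 := by rw [← hx]; ring

section Orlicz

variable {Ω : Type*} [MeasurableSpace Ω] {μ : Measure Ω}

lemma lintegral_le_of_tendsto_of_eventually_le {ι : Type*} {u : Filter ι}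
    [u.IsCountablyGenerated] [u.NeBot] {f : ι → Ω → ℝ≥0∞} {g : Ω → ℝ≥0∞}
    (hf : ∀ i, AEMeasurable (f i) μ) (hfg : ∀ ω, Tendsto (fun i => f i ω) u (𝓝 (g ω)))
    {c : ℝ≥0∞} (hc : ∀ᶠ i in u, ∫⁻ ω, f i ω ∂μ ≤ c) : ∫⁻ ω, g ω ∂μ ≤ c :=
  calc ∫⁻ ω, g ω ∂μ = ∫⁻ ω, liminf (fun i => f i ω) u ∂μ :=
        lintegral_congr fun ω => (hfg ω).liminf_eq.symm
    _ ≤ liminf (fun i => ∫⁻ ω, f i ω ∂μ) u := lintegral_liminf_le' hf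
    _ ≤ c := liminf_le_of_frequently_le' hc.frequently

lemma lintegral_exp_le_two_of_e2Norm_lt {n : ℕ} {ξ : Fin n → Ω → ℝ} {K : ℝ}
    (hK : e2Norm μ ξ < ENNReal.ofReal K) :
    ∫⁻ ω, ENNReal.ofReal (Real.exp ((∑ i, ξ i ω ^ 2) / K ^ 2)) ∂μ ≤ 2 := by
  obtain ⟨K', hK'pos, hK', hK'K⟩ : ∃ K', 0 < K' ∧
      ∫⁻ ω, ENNReal.ofReal (Real.exp ((∑ i, ξ i ω ^ 2) / K' ^ 2)) ∂μ ≤ 2 ∧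
        ENNReal.ofReal K' < ENNReal.ofReal K := by
    simpa only [e2Norm, iInf_lt_iff, exists_prop] using hK
  have hlt : K' < K := (ENNReal.ofReal_lt_ofReal_iff_of_nonneg hK'pos.le).1 hK'K
  refine le_trans (lintegral_mono fun ω => ?_) hK'
  gcongr

lemma lintegral_exp_div_e2Norm_sq_le {n : ℕ} {ξ : Fin n → Ω → ℝ} (hξ : ∀ i, Measurable (ξ i))
    (hK : 0 < (e2Norm μ ξ).toReal) :
    ∫⁻ ω, ENNReal.ofReal (Real.exp ((∑ i, ξ i ω ^ 2) / (e2Norm μ ξ).toReal ^ 2)) ∂μ ≤ 2 := by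
  set K := (e2Norm μ ξ).toReal
  refine lintegral_le_of_tendsto_of_eventually_le (u := 𝓝[>] K)
    (f := fun k ω => ENNReal.ofReal (Real.exp ((∑ i, ξ i ω ^ 2) / k ^ 2)))
    (fun k => by fun_prop) (fun ω => ?_)
    (eventually_nhdsWithin_of_forall fun k hk => lintegral_exp_le_two_of_e2Norm_lt ?_)
  · refine ENNReal.continuous_ofReal.continuousAt.comp ?_ |>.tendsto.mono_left
      nhdsWithin_le_nhds
    fun_prop (disch := positivity)
  · rw [← ENNReal.ofReal_toReal (ENNReal.toReal_pos_iff.1 hK).2.ne]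
    exact ENNReal.ofReal_lt_ofReal_iff'.2 ⟨hk, hK.trans hk⟩

lemma psi1Norm_le_ofReal {η : Ω → ℝ} {B : ℝ} (hB : 0 < B)
    (h : ∫⁻ ω, ENNReal.ofReal (Real.exp |η ω / B|) ∂μ ≤ 2) : psi1Norm μ η ≤ ENNReal.ofReal B :=
  iInf₂_le_of_le B hB (iInf_le _ h)

lemma lintegral_exp_abs_quadForm_div_le {n : ℕ} {A : Matrix (Fin n) (Fin n) ℝ}
    {ξ : Fin n → Ω → ℝ} (hξ : ∀ i, Measurable (ξ i))
    (hB : 0 < matOpNorm A * (e2Norm μ ξ).toReal ^ 2) :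
    ∫⁻ ω, ENNReal.ofReal (Real.exp
      |(∑ i, ∑ j, A i j * ξ i ω * ξ j ω) / (matOpNorm A * (e2Norm μ ξ).toReal ^ 2)|) ∂μ ≤ 2 := by
  set K := (e2Norm μ ξ).toReal
  have hK : 0 < K := by
    refine ENNReal.toReal_nonneg.lt_of_ne fun hK => ?_
    simp [K, ← hK] at hB
  refine le_trans (lintegral_mono fun ω => ?_) (lintegral_exp_div_e2Norm_sq_le hξ hK)
  gcongr
  rw [abs_div, abs_of_pos hB, div_le_div_iff₀ hB (by positivity)]
  nlinarith [abs_quadForm_le A (ξ · ω), pow_pos hK 2]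

end Orlicz

section Centering

variable {Ω : Type*} [MeasurableSpace Ω] {μ : Measure Ω} {X : Ω → ℝ} {B : ℝ}

lemma integrable_exp_abs_div (hX : Measurable X)
    (h : ∫⁻ ω, ENNReal.ofReal (Real.exp |X ω / B|) ∂μ ≤ 2) :
    Integrable (fun ω => Real.exp |X ω / B|) μ := by
  refine ⟨by fun_prop, ?_⟩
  rw [hasFiniteIntegral_iff_ofReal (ae_of_all _ fun ω => (Real.exp_pos _).le)]
  exact h.trans_lt ENNReal.ofNat_lt_top

lemma integral_exp_abs_div_le (hX : Measurable X)
    (h : ∫⁻ ω, ENNReal.ofReal (Real.exp |X ω / B|) ∂μ ≤ 2) :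
    ∫ ω, Real.exp |X ω / B| ∂μ ≤ 2 := by
  rw [integral_eq_lintegral_of_nonneg_ae (ae_of_all _ fun ω => (Real.exp_pos _).le)
    (by fun_prop)]
  exact ENNReal.toReal_le_of_le_ofReal zero_le_two (by simpa using h)

lemma integrable_of_lintegral_exp_abs_div_le (hX : Measurable X) (hB : 0 < B)
    (h : ∫⁻ ω, ENNReal.ofReal (Real.exp |X ω / B|) ∂μ ≤ 2) : Integrable X μ := by
  refine ((integrable_exp_abs_div hX h).const_mul B).mono' hX.aestronglyMeasurable
    (ae_of_all _ fun ω => ?_)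
  calc ‖X ω‖ = B * |X ω / B| := by rw [Real.norm_eq_abs, abs_div, abs_of_pos hB]; field_simp
    _ ≤ B * Real.exp |X ω / B| := by gcongr; linarith [Real.add_one_le_exp |X ω / B|]

variable [IsProbabilityMeasure μ]

lemma exp_abs_integral_div_le (hX : Measurable X) (hB : 0 < B)
    (h : ∫⁻ ω, ENNReal.ofReal (Real.exp |X ω / B|) ∂μ ≤ 2) :
    Real.exp |(∫ ω, X ω ∂μ) / B| ≤ 2 := by
  have hXB : Integrable (fun ω => |X ω / B|) μ :=
    ((integrable_of_lintegral_exp_abs_div_le hX hB h).div_const B).abs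
  calc Real.exp |(∫ ω, X ω ∂μ) / B| ≤ Real.exp (∫ ω, |X ω / B| ∂μ) := by
        rw [← integral_div]
        exact Real.exp_le_exp.2 abs_integral_le_integral_abs
    _ ≤ ∫ ω, Real.exp |X ω / B| ∂μ :=
        convexOn_exp.map_integral_le Real.continuous_exp.continuousOn isClosed_univ
          (ae_of_all _ fun _ => mem_univ _) hXB (integrable_exp_abs_div hX h)
    _ ≤ 2 := integral_exp_abs_div_le hX h

lemma lintegral_exp_abs_sub_integral_div_le (hX : Measurable X) (hB : 0 < B)
    (h : ∫⁻ ω, ENNReal.ofReal (Real.exp |X ω / B|) ∂μ ≤ 2) :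
    ∫⁻ ω, ENNReal.ofReal (Real.exp |(X ω - ∫ ω', X ω' ∂μ) / (2 * B)|) ∂μ ≤ 2 := by
  set m := ∫ ω', X ω' ∂μ
  set c := Real.exp |m / B|
  have hpoint (ω : Ω) :
      Real.exp |(X ω - m) / (2 * B)| ≤ (Real.exp |X ω / B| + c) / 2 := by
    have hconv := convexOn_exp.2 (mem_univ |X ω / B|) (mem_univ |m / B|)
      (by norm_num : (0 : ℝ) ≤ 1 / 2) (by norm_num : (0 : ℝ) ≤ 1 / 2) (add_halves 1)
    simp only [smul_eq_mul] at hconv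
    refine le_trans (Real.exp_le_exp.2 ?_) (hconv.trans_eq (by ring))
    rw [abs_div, abs_div, abs_div, abs_of_pos hB, abs_of_pos (by positivity : 0 < 2 * B)]
    have := abs_sub (X ω) m
    field_simp
    linarith
  have hint : Integrable (fun ω => (Real.exp |X ω / B| + c) / 2) μ :=
    ((integrable_exp_abs_div hX h).add (integrable_const c)).div_const 2
  calc ∫⁻ ω, ENNReal.ofReal (Real.exp |(X ω - m) / (2 * B)|) ∂μ
      ≤ ∫⁻ ω, ENNReal.ofReal ((Real.exp |X ω / B| + c) / 2) ∂μ :=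
        lintegral_mono fun ω => ENNReal.ofReal_le_ofReal (hpoint ω)
    _ = ENNReal.ofReal (∫ ω, (Real.exp |X ω / B| + c) / 2 ∂μ) :=
        (ofReal_integral_eq_lintegral_ofReal hint
          (ae_of_all _ fun ω => by positivity)).symm
    _ ≤ ENNReal.ofReal 2 := by
        refine ENNReal.ofReal_le_ofReal ?_
        rw [integral_div, integral_add (integrable_exp_abs_div hX h) (integrable_const c),
          integral_const, probReal_univ, one_smul]
        linarith [integral_exp_abs_div_le hX h, exp_abs_integral_div_le hX hB h]
    _ = 2 := ENNReal.ofReal_ofNat 2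

end Centering

section Tail

variable {Ω : Type*} [MeasurableSpace Ω] {μ : Measure Ω}

lemma measure_le_ofReal_two_mul_exp_neg [IsProbabilityMeasure μ] (s : Set Ω) {M : ℝ}
    (hM : M ≤ 0) : μ s ≤ ENNReal.ofReal (2 * Real.exp (-M)) := by
  refine prob_le_one.trans (ENNReal.one_le_ofReal.2 ?_)
  linarith [Real.one_le_exp (neg_nonneg.2 hM)]

lemma measure_ge_le_of_lintegral_exp_le {η : Ω → ℝ} (hη : Measurable η) (t : ℝ) {l c : ℝ}
    (hl : 0 ≤ l)
    (hmgf : ∫⁻ ω, ENNReal.ofReal (Real.exp (l * η ω)) ∂μ ≤ ENNReal.ofReal (Real.exp c)) :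
    μ {ω | t ≤ η ω} ≤ ENNReal.ofReal (Real.exp (c - l * t)) := by
  set ε := ENNReal.ofReal (Real.exp (l * t))
  have hε : ε ≠ 0 := by simp [ε, Real.exp_pos]
  have hsub : {ω | t ≤ η ω} ⊆ {ω | ε ≤ ENNReal.ofReal (Real.exp (l * η ω))} := fun ω hω =>
    ENNReal.ofReal_le_ofReal (Real.exp_le_exp.2 (mul_le_mul_of_nonneg_left hω hl))
  calc μ {ω | t ≤ η ω} ≤ μ {ω | ε ≤ ENNReal.ofReal (Real.exp (l * η ω))} := measure_mono hsub
    _ ≤ ENNReal.ofReal (Real.exp c) / ε := by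
        rw [ENNReal.le_div_iff_mul_le (Or.inl hε) (Or.inl ENNReal.ofReal_ne_top), mul_comm]
        exact (mul_meas_ge_le_lintegral₀ (by fun_prop) ε).trans hmgf
    _ = ENNReal.ofReal (Real.exp (c - l * t)) := by
        rw [← ENNReal.ofReal_div_of_pos (Real.exp_pos _), ← Real.exp_sub]

lemma exists_mul_sub_sq_ge_min {D t : ℝ} (hD : 0 < D) (ht : 0 < t) :
    ∃ l, 0 ≤ l ∧ D * l ≤ 1 ∧ min (t ^ 2 / (4 * D ^ 2)) (t / (2 * D)) ≤ l * t - D ^ 2 * l ^ 2 := by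
  rcases le_or_gt t (2 * D) with h | h
  · refine ⟨t / (2 * D ^ 2), by positivity, ?_, (min_le_left _ _).trans_eq ?_⟩
    · rw [show D * (t / (2 * D ^ 2)) = t / (2 * D) by field_simp, div_le_one (by positivity)]
      exact h
    · field_simp
      ring
  · refine ⟨1 / D, by positivity, by field_simp; rfl, (min_le_right _ _).trans ?_⟩
    rw [div_le_iff₀ (by positivity)]
    field_simp
    nlinarith

lemma measure_abs_ge_le_of_lintegral_exp_le [IsProbabilityMeasure μ] {η : Ω → ℝ}
    (hη : Measurable η) {D : ℝ} (hD : 0 < D)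
    (hmgf : ∀ s, D * |s| ≤ 1 →
      ∫⁻ ω, ENNReal.ofReal (Real.exp (s * η ω)) ∂μ ≤ ENNReal.ofReal (Real.exp (D ^ 2 * s ^ 2)))
    (t : ℝ) :
    μ {ω | t ≤ |η ω|} ≤
      ENNReal.ofReal (2 * Real.exp (-min (t ^ 2 / (4 * D ^ 2)) (t / (2 * D)))) := by
  set M := min (t ^ 2 / (4 * D ^ 2)) (t / (2 * D))
  rcases le_or_gt t 0 with ht | ht
  · exact measure_le_ofReal_two_mul_exp_neg _
      ((min_le_right _ _).trans (div_nonpos_of_nonpos_of_nonneg ht (by positivity)))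
  obtain ⟨l, hl, hDl, hlM⟩ := exists_mul_sub_sq_ge_min hD ht
  have hexp : Real.exp (D ^ 2 * l ^ 2 - l * t) ≤ Real.exp (-M) := Real.exp_le_exp.2 (by linarith)
  have hupper : μ {ω | t ≤ η ω} ≤ ENNReal.ofReal (Real.exp (-M)) :=
    (measure_ge_le_of_lintegral_exp_le hη t hl (hmgf l (by rwa [abs_of_nonneg hl]))).trans
      (ENNReal.ofReal_le_ofReal hexp)
  have hlower : μ {ω | t ≤ -η ω} ≤ ENNReal.ofReal (Real.exp (-M)) := by
    refine (measure_ge_le_of_lintegral_exp_le hη.neg t hl ?_).trans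
      (ENNReal.ofReal_le_ofReal hexp)
    simpa [neg_sq] using hmgf (-l) (by rwa [abs_neg, abs_of_nonneg hl])
  calc μ {ω | t ≤ |η ω|} ≤ μ ({ω | t ≤ η ω} ∪ {ω | t ≤ -η ω}) :=
        measure_mono fun ω (hω : t ≤ |η ω|) => le_abs.1 hω
    _ ≤ ENNReal.ofReal (Real.exp (-M)) + ENNReal.ofReal (Real.exp (-M)) :=
        (measure_union_le _ _).trans (add_le_add hupper hlower)
    _ = ENNReal.ofReal (2 * Real.exp (-M)) := by
        rw [← ENNReal.ofReal_add (Real.exp_pos _).le (Real.exp_pos _).le, two_mul]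

end Tail

theorem hanson_wright_general {Ω : Type u} [MeasurableSpace Ω] (μ : Measure Ω)
    [IsProbabilityMeasure μ] (n : ℕ) (A : Matrix (Fin n) (Fin n) ℝ)
    (ξ : Fin n → Ω → ℝ) (hmeas : ∀ i, Measurable (ξ i))
    (C : ℝ) (hC : 0 < C)
    (hCprop : ∀ (Ω' : Type u) [MeasurableSpace Ω'] (μ' : Measure Ω')
      [IsProbabilityMeasure μ'] (η : Ω' → ℝ), Measurable η → Integrable η μ' →
      (∫ ω, η ω ∂μ') = 0 → psi1Norm μ' η < ⊤ →
      ∀ t : ℝ, C * (psi1Norm μ' η).toReal * |t| ≤ 1 →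
        ∫⁻ ω, ENNReal.ofReal (Real.exp (t * η ω)) ∂μ' ≤
          ENNReal.ofReal (Real.exp (C ^ 2 * (psi1Norm μ' η).toReal ^ 2 * t ^ 2)))
    (t : ℝ) :
    μ {ω | t ≤ |(∑ i, ∑ j, A i j * ξ i ω * ξ j ω) -
        ∫ ω', ∑ i, ∑ j, A i j * ξ i ω' * ξ j ω' ∂μ|} ≤
      ENNReal.ofReal (2 * Real.exp
        (-min (t ^ 2 / (16 * C ^ 2 * matOpNorm A ^ 2 * (e2Norm μ ξ).toReal ^ 4))
              (t / (4 * C * matOpNorm A * (e2Norm μ ξ).toReal ^ 2)))) := by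
  set K := (e2Norm μ ξ).toReal
  set B := matOpNorm A * K ^ 2
  rcases (mul_nonneg (matOpNorm_nonneg A) (sq_nonneg K)).eq_or_lt with hB | hB
  · -- the exponent is `-min (t ^ 2 / 0) (t / 0) = 0`
    refine measure_le_ofReal_two_mul_exp_neg _ ((min_le_left _ _).trans_eq ?_)
    rw [show 16 * C ^ 2 * matOpNorm A ^ 2 * K ^ 4 = 16 * C ^ 2 * B ^ 2 by ring,
      show B = 0 from hB.symm]
    simp
  set X := fun ω => ∑ i, ∑ j, A i j * ξ i ω * ξ j ω
  have hX : Measurable X := by fun_prop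
  have hXB := lintegral_exp_abs_quadForm_div_le hmeas hB
  have hX_int := integrable_of_lintegral_exp_abs_div_le hX hB hXB
  set η := fun ω => X ω - ∫ ω', X ω' ∂μ
  have hψ : psi1Norm μ η ≤ ENNReal.ofReal (2 * B) :=
    psi1Norm_le_ofReal (by positivity) (lintegral_exp_abs_sub_integral_div_le hX hB hXB)
  have hmgf (s : ℝ) (hs : C * (2 * B) * |s| ≤ 1) :
      ∫⁻ ω, ENNReal.ofReal (Real.exp (s * η ω)) ∂μ ≤
        ENNReal.ofReal (Real.exp ((C * (2 * B)) ^ 2 * s ^ 2)) := by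
    have hψB : (psi1Norm μ η).toReal ≤ 2 * B :=
      ENNReal.toReal_le_of_le_ofReal (by positivity) hψ
    refine (hCprop Ω μ η (hX.sub_const _) (hX_int.sub (integrable_const _))
      (by simp [η, integral_sub hX_int]) (hψ.trans_lt ENNReal.ofReal_lt_top) s
      (le_trans (by gcongr) hs)).trans ?_
    rw [mul_pow C]
    gcongr
  convert measure_abs_ge_le_of_lintegral_exp_le (hX.sub_const _) (by positivity) hmgf t
    using 6 <;> simp only [B] <;> ring

/-- (Hanson–Wright-type inequality.) Let `A` be an `n×n` real matrix with
operator norm `‖A‖`, `ξ` a random vector with `K = ‖ξ‖_{E_2} < ∞`, and `C > 0` a constant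
such that every centered random variable `η` with finite ψ_1-norm satisfies
`E exp(tη) ≤ exp(C²‖η‖_{ψ_1}²t²)` for `|t| ≤ 1/(C‖η‖_{ψ_1})`. Then for every `t ≥ 0`,
`P(|ξᵀAξ - E(ξᵀAξ)| ≥ t) ≤ 2 exp(-min{t²/(16C²‖A‖²K⁴), t/(4C‖A‖K²)})`. -/
theorem hanson_wright {Ω : Type u} [MeasurableSpace Ω] (μ : Measure Ω)
    [IsProbabilityMeasure μ] (n : ℕ) (A : Matrix (Fin n) (Fin n) ℝ)
    (ξ : Fin n → Ω → ℝ) (hmeas : ∀ i, Measurable (ξ i))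
    (hfin : e2Norm μ ξ < ⊤)
    (C : ℝ) (hC : 0 < C)
    (hCprop : ∀ (Ω' : Type u) [MeasurableSpace Ω'] (μ' : Measure Ω')
      [IsProbabilityMeasure μ'] (η : Ω' → ℝ), Measurable η → Integrable η μ' →
      (∫ ω, η ω ∂μ') = 0 → psi1Norm μ' η < ⊤ →
      ∀ t : ℝ, C * (psi1Norm μ' η).toReal * |t| ≤ 1 →
        ∫⁻ ω, ENNReal.ofReal (Real.exp (t * η ω)) ∂μ' ≤
          ENNReal.ofReal (Real.exp (C ^ 2 * (psi1Norm μ' η).toReal ^ 2 * t ^ 2)))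
    (t : ℝ) (ht : 0 ≤ t) :
    μ {ω | t ≤ |(∑ i, ∑ j, A i j * ξ i ω * ξ j ω) -
        ∫ ω', ∑ i, ∑ j, A i j * ξ i ω' * ξ j ω' ∂μ|} ≤
      ENNReal.ofReal (2 * Real.exp
        (-min (t ^ 2 / (16 * C ^ 2 * matOpNorm A ^ 2 * (e2Norm μ ξ).toReal ^ 4))
              (t / (4 * C * matOpNorm A * (e2Norm μ ξ).toReal ^ 2)))) :=
  hanson_wright_general μ n A ξ hmeas C hC hCprop t
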